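/- Let H = ℂ[G] with G a group, and let M be a right H-Hopf module: M has a right H-module action ⊲ and a right H-comodule structure δ such that δ(m ⊲ h) = Σ (m_{(0)} ⊲ h_{(1)}) ⊗ m_{(1)} h_{(2)}. Then the space of coinvariants M^{coH} = {m ∈ M : δ(m) = m ⊗ 1} is a submodule-generating subspace and the natural map M^{coH} ⊗ H → M, v ⊗ h ↦ v ⊲ h, is an isomorphism of vector spaces (the fundamental theorem of Hopf modules for group algebras). -/

import Mathlib

open MonoidAlgebra TensorProduct

/-- Comultiplication on the group algebra `H = ℂ[G]`, `Δ(g) = g ⊗ g`. -/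
noncomputable def groupComul (G : Type*) [Group G] :
    MonoidAlgebra ℂ G →ₗ[ℂ] MonoidAlgebra ℂ G ⊗[ℂ] MonoidAlgebra ℂ G :=
  (Finsupp.lsum ℂ fun g => LinearMap.toSpanSingleton ℂ _
    ((MonoidAlgebra.single g (1 : ℂ)) ⊗ₜ[ℂ] (MonoidAlgebra.single g (1 : ℂ))))
    ∘ₗ (MonoidAlgebra.coeffLinearEquiv ℂ).toLinearMap

/-- Counit on the group algebra `ℂ[G]`, `η(g) = 1`. -/
noncomputable def groupCounit (G : Type*) [Group G] :
    MonoidAlgebra ℂ G →ₗ[ℂ] ℂ :=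
  (Finsupp.lsum ℂ fun _ => LinearMap.id) ∘ₗ (MonoidAlgebra.coeffLinearEquiv ℂ).toLinearMap

/-- The coinvariants `M^{coH} = {m : δ(m) = m ⊗ 1}` of a right
`ℂ[G]`-comodule `M`. -/
noncomputable def coinvariants {G : Type*} [Group G] {M : Type*} [AddCommGroup M]
    [Module ℂ M] (δ : M →ₗ[ℂ] M ⊗[ℂ] MonoidAlgebra ℂ G) : Submodule ℂ M :=
  LinearMap.ker (δ - (TensorProduct.mk ℂ M (MonoidAlgebra ℂ G)).flip 1)

section Aux

variable {G : Type*} [Group G] [DecidableEq G] {M N : Type*}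
  [AddCommGroup M] [Module ℂ M] [AddCommGroup N] [Module ℂ N]

lemma groupComul_single (G : Type*) [Group G] (k : G) (c : ℂ) :
    groupComul G (MonoidAlgebra.single k c) =
      c • ((MonoidAlgebra.single k (1 : ℂ)) ⊗ₜ[ℂ] (MonoidAlgebra.single k (1 : ℂ))) :=
  by rw [groupComul, LinearMap.comp_apply]; exact Finsupp.lsum_single (R := ℂ) (S := ℂ) _ k c

lemma groupCounit_single (G : Type*) [Group G] (k : G) (c : ℂ) :
    groupCounit G (MonoidAlgebra.single k c) = c :=
  by rw [groupCounit, LinearMap.comp_apply]; exact Finsupp.lsum_single (R := ℂ) (S := ℂ) (fun _ => LinearMap.id) k c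

omit [DecidableEq G] in
lemma mem_coinvariants_iff (δ : M →ₗ[ℂ] M ⊗[ℂ] MonoidAlgebra ℂ G) (x : M) :
    x ∈ coinvariants δ ↔ δ x = x ⊗ₜ[ℂ] (1 : MonoidAlgebra ℂ G) := by
  simp only [coinvariants, LinearMap.mem_ker, LinearMap.sub_apply, sub_eq_zero,
    LinearMap.flip_apply, TensorProduct.mk_apply]

omit [DecidableEq G] in
/-- `N ⊗ ℂ[G] ≃ (G →₀ N)`. -/
noncomputable def fsR (N : Type*) [AddCommGroup N] [Module ℂ N] (G : Type*) [Group G]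
    [DecidableEq G] :
    N ⊗[ℂ] MonoidAlgebra ℂ G ≃ₗ[ℂ] (G →₀ N) :=
  (LinearEquiv.lTensor N (MonoidAlgebra.coeffLinearEquiv ℂ)).trans
    (TensorProduct.finsuppScalarRight ℂ ℂ N G)

lemma fsR_tmul_apply (x : N) (f : MonoidAlgebra ℂ G) (h : G) :
    fsR N G (x ⊗ₜ[ℂ] f) h = f.coeff h • x :=
  TensorProduct.finsuppScalarRight_apply_tmul_apply (S := ℂ) x f.coeff h

lemma fsR_tmul_single (x : N) (k h : G) (c : ℂ) :
    fsR N G (x ⊗ₜ[ℂ] MonoidAlgebra.single k c) h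
      = if k = h then c • x else 0 := by
  rw [fsR_tmul_apply, MonoidAlgebra.coeff_single, Finsupp.single_apply]
  split_ifs <;> simp

/-- The coaction in coordinates. -/
noncomputable def rhoL (δ : M →ₗ[ℂ] M ⊗[ℂ] MonoidAlgebra ℂ G) : M →ₗ[ℂ] (G →₀ M) :=
  (fsR M G).toLinearMap ∘ₗ δ

lemma key1 (δ : M →ₗ[ℂ] M ⊗[ℂ] MonoidAlgebra ℂ G)
    (t : M ⊗[ℂ] MonoidAlgebra ℂ G) (h : G) :
    fsR (M ⊗[ℂ] MonoidAlgebra ℂ G) G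
        (TensorProduct.map δ LinearMap.id t) h =
      δ (fsR M G t h) := by
  induction t using TensorProduct.induction_on with
  | zero => simp
  | tmul x f =>
      induction f using MonoidAlgebra.induction_linear with
      | zero => simp
      | add f g hf hg =>
          simp only [TensorProduct.tmul_add, map_add, Finsupp.add_apply, hf, hg]
      | single k c =>
          rw [TensorProduct.map_tmul, LinearMap.id_coe, id_eq,
            fsR_tmul_single, fsR_tmul_single]
          split_ifs <;> simp
  | add s t hs ht => simp only [map_add, Finsupp.add_apply, hs, ht]

lemma key2 (t : M ⊗[ℂ] MonoidAlgebra ℂ G) (h : G) :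
    fsR (M ⊗[ℂ] MonoidAlgebra ℂ G) G
        ((TensorProduct.assoc ℂ M (MonoidAlgebra ℂ G) (MonoidAlgebra ℂ G)).symm
          (TensorProduct.map LinearMap.id (groupComul G) t)) h =
      (fsR M G t h) ⊗ₜ[ℂ] (MonoidAlgebra.single h (1 : ℂ)) := by
  induction t using TensorProduct.induction_on with
  | zero => simp
  | tmul x f =>
      induction f using MonoidAlgebra.induction_linear with
      | zero => simp
      | add f g hf hg =>
          simp only [TensorProduct.tmul_add, map_add, Finsupp.add_apply, hf, hg,
            TensorProduct.add_tmul]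
      | single k c =>
          rw [TensorProduct.map_tmul, LinearMap.id_coe, id_eq, groupComul_single,
            TensorProduct.tmul_smul, map_smul, map_smul, TensorProduct.assoc_symm_tmul,
            Finsupp.smul_apply, fsR_tmul_single, fsR_tmul_single]
          split_ifs with hk
          · subst hk
            simp [TensorProduct.smul_tmul']
          · simp
  | add s t hs ht =>
      simp only [map_add, Finsupp.add_apply, hs, ht, TensorProduct.add_tmul]

lemma keyComp (δ : M →ₗ[ℂ] M ⊗[ℂ] MonoidAlgebra ℂ G)
    (t : M ⊗[ℂ] MonoidAlgebra ℂ G) (h : G)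
    (hco : (TensorProduct.assoc ℂ M (MonoidAlgebra ℂ G) (MonoidAlgebra ℂ G))
          (TensorProduct.map δ LinearMap.id t) =
        TensorProduct.map LinearMap.id (groupComul G) t) :
    δ (fsR M G t h) =
      (fsR M G t h) ⊗ₜ[ℂ]
        (MonoidAlgebra.single h (1 : ℂ)) := by
  calc δ (fsR M G t h)
      = fsR (M ⊗[ℂ] MonoidAlgebra ℂ G) G
          (TensorProduct.map δ LinearMap.id t) h := (key1 δ t h).symm
    _ = fsR (M ⊗[ℂ] MonoidAlgebra ℂ G) G
          ((TensorProduct.assoc ℂ M (MonoidAlgebra ℂ G) (MonoidAlgebra ℂ G)).symm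
            ((TensorProduct.assoc ℂ M (MonoidAlgebra ℂ G) (MonoidAlgebra ℂ G))
              (TensorProduct.map δ LinearMap.id t))) h := by
        rw [LinearEquiv.symm_apply_apply]
    _ = fsR (M ⊗[ℂ] MonoidAlgebra ℂ G) G
          ((TensorProduct.assoc ℂ M (MonoidAlgebra ℂ G) (MonoidAlgebra ℂ G)).symm
            (TensorProduct.map LinearMap.id (groupComul G) t)) h := by rw [hco]
    _ = (fsR M G t h) ⊗ₜ[ℂ]
          (MonoidAlgebra.single h (1 : ℂ)) := key2 t h

lemma key3 (t : M ⊗[ℂ] MonoidAlgebra ℂ G) :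
    (fsR M G t).sum (fun _ v => v) =
      TensorProduct.rid ℂ M
        (TensorProduct.map (LinearMap.id : M →ₗ[ℂ] M) (groupCounit G) t) := by
  induction t using TensorProduct.induction_on with
  | zero => simp
  | tmul x f =>
      induction f using MonoidAlgebra.induction_linear with
      | zero => simp
      | add f g hf hg =>
          rw [TensorProduct.tmul_add, map_add, map_add,
            Finsupp.sum_add_index (by simp) (by intros; rfl), hf, hg, map_add]
      | single k c =>
          have h1 : fsR M G
              (x ⊗ₜ[ℂ] MonoidAlgebra.single k c) = Finsupp.single k (c • x) := by
            ext i
            rw [fsR_tmul_single, Finsupp.single_apply]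
          rw [h1, Finsupp.sum_single_index rfl, TensorProduct.map_tmul,
            LinearMap.id_coe, id_eq, groupCounit_single, TensorProduct.rid_tmul]
  | add s t hs ht =>
      rw [map_add, map_add, Finsupp.sum_add_index (by simp) (by intros; rfl), hs, ht, map_add]

lemma key4 (act : G → M →ₗ[ℂ] M) (g : G) (t : M ⊗[ℂ] MonoidAlgebra ℂ G) (h : G) :
    fsR M G
        (TensorProduct.map (act g)
          (LinearMap.mulRight ℂ (MonoidAlgebra.single g (1 : ℂ))) t) h =
      act g (fsR M G t (h * g⁻¹)) := by
  induction t using TensorProduct.induction_on with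
  | zero => simp
  | tmul x f =>
      induction f using MonoidAlgebra.induction_linear with
      | zero => simp
      | add f g hf hg =>
          simp only [TensorProduct.tmul_add, map_add, Finsupp.add_apply, hf, hg]
      | single k c =>
          rw [TensorProduct.map_tmul, LinearMap.mulRight_apply,
            MonoidAlgebra.single_mul_single, mul_one, fsR_tmul_single, fsR_tmul_single]
          have hiff : k * g = h ↔ k = h * g⁻¹ := by
            constructor
            · intro hh; rw [← hh]; group
            · intro hh; rw [hh]; group
          by_cases hk : k * g = h
          · rw [if_pos hk, if_pos (hiff.mp hk), map_smul]
          · rw [if_neg hk, if_neg (fun hc => hk (hiff.mpr hc)), map_zero]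
  | add s t hs ht => simp only [map_add, Finsupp.add_apply, hs, ht]

end Aux

/-- Fundamental theorem of Hopf modules for `H = ℂ[G]`: for a right `H`-Hopf
module `M` — a `ℂ`-vector space with a right `G`-action `act` (equivalently, a
right `ℂ[G]`-module structure) and a coassociative counital coaction `δ`
satisfying the Hopf compatibility `δ(m ⊲ g) = Σ (m₍₀₎ ⊲ g) ⊗ m₍₁₎ g` on group
elements — the natural map `M^{coH} ⊗ H → M`, `v ⊗ g ↦ v ⊲ g`, is a linear
isomorphism. (We identify `M^{coH} ⊗ ℂ[G]` with `G →₀ M^{coH}`, under which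
the natural map becomes `Finsupp.lsum` of `v ↦ v ⊲ g`.) -/
theorem hopf_module_fundamental (G : Type*) [Group G] (M : Type*) [AddCommGroup M]
    [Module ℂ M] (act : G → M →ₗ[ℂ] M)
    (hact_one : act 1 = LinearMap.id)
    (hact_mul : ∀ g h : G, act (g * h) = act h ∘ₗ act g)
    (δ : M →ₗ[ℂ] M ⊗[ℂ] MonoidAlgebra ℂ G)
    (hcoassoc : ∀ m : M,
      (TensorProduct.assoc ℂ M (MonoidAlgebra ℂ G) (MonoidAlgebra ℂ G))
          (TensorProduct.map δ LinearMap.id (δ m)) =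
        TensorProduct.map LinearMap.id (groupComul G) (δ m))
    (hcounit : ∀ m : M,
      TensorProduct.map (LinearMap.id : M →ₗ[ℂ] M) (groupCounit G) (δ m) =
        m ⊗ₜ[ℂ] (1 : ℂ))
    (hhopf : ∀ (g : G) (m : M),
      δ (act g m) =
        TensorProduct.map (act g)
          (LinearMap.mulRight ℂ (MonoidAlgebra.single g (1 : ℂ))) (δ m)) :
    Function.Bijective
      (Finsupp.lsum ℂ (fun g => act g ∘ₗ (coinvariants δ).subtype) :
        (G →₀ ↥(coinvariants δ)) →ₗ[ℂ] M) := by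
  classical
  set ρ : M →ₗ[ℂ] (G →₀ M) := rhoL δ with hρdef
  have hρ : ∀ m : M, ρ m = fsR M G (δ m) := fun m => rfl
  -- action inverses
  have hinv1 : ∀ (g : G) (x : M), act g⁻¹ (act g x) = x := by
    intro g x
    have := congrArg (fun f => f x) (hact_mul g g⁻¹)
    simpa [hact_one] using this.symm
  have hinv2 : ∀ (g : G) (x : M), act g (act g⁻¹ x) = x := by
    intro g x
    have := congrArg (fun f => f x) (hact_mul g⁻¹ g)
    simpa [hact_one] using this.symm
  -- components are homogeneous
  have hcomp : ∀ (m : M) (h : G),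
      δ (ρ m h) = (ρ m h) ⊗ₜ[ℂ] (MonoidAlgebra.single h (1 : ℂ)) := by
    intro m h
    exact keyComp δ (δ m) h (hcoassoc m)
  -- sum of components recovers m
  have hsum : ∀ m : M, (ρ m).sum (fun _ v => v) = m := by
    intro m
    calc (ρ m).sum (fun _ v => v)
        = TensorProduct.rid ℂ M
            (TensorProduct.map (LinearMap.id : M →ₗ[ℂ] M) (groupCounit G) (δ m)) :=
          key3 (δ m)
      _ = TensorProduct.rid ℂ M (m ⊗ₜ[ℂ] (1 : ℂ)) := by rw [hcounit m]
      _ = m := by rw [TensorProduct.rid_tmul, one_smul]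
  -- shift under the action
  have hshift : ∀ (g : G) (m : M) (h : G), ρ (act g m) h = act g (ρ m (h * g⁻¹)) := by
    intro g m h
    calc ρ (act g m) h
        = fsR M G (δ (act g m)) h := rfl
      _ = fsR M G
            (TensorProduct.map (act g)
              (LinearMap.mulRight ℂ (MonoidAlgebra.single g (1 : ℂ))) (δ m)) h := by
          rw [hhopf g m]
      _ = act g (fsR M G (δ m) (h * g⁻¹)) :=
          key4 act g (δ m) h
      _ = act g (ρ m (h * g⁻¹)) := rfl
  -- component of a coinvariant
  have hcoinv_comp : ∀ (v : M), v ∈ coinvariants δ → ∀ h : G,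
      ρ v h = if h = 1 then v else 0 := by
    intro v hv h
    rw [hρ, (mem_coinvariants_iff δ v).mp hv, MonoidAlgebra.one_def, fsR_tmul_single]
    by_cases h1 : h = 1
    · rw [if_pos h1.symm, if_pos h1, one_smul]
    · rw [if_neg (fun hc : (1:G) = h => h1 hc.symm), if_neg h1]
  -- component of the image of the map
  have hcomp_lsum : ∀ (F : G →₀ ↥(coinvariants δ)) (h : G),
      ρ ((Finsupp.lsum ℂ (fun g => act g ∘ₗ (coinvariants δ).subtype)) F) h
        = act h (F h) := by
    intro F h
    rw [Finsupp.lsum_apply, Finsupp.sum, map_sum, Finsupp.finset_sum_apply]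
    have hterm : ∀ g ∈ F.support,
        ρ ((act g ∘ₗ (coinvariants δ).subtype) (F g)) h
          = if g = h then act g ↑(F g) else 0 := by
      intro g _
      rw [LinearMap.comp_apply, Submodule.subtype_apply, hshift g _ h,
        hcoinv_comp _ (F g).2 (h * g⁻¹)]
      by_cases hg : g = h
      · subst hg; simp
      · rw [if_neg (fun hc : h * g⁻¹ = 1 => hg (by
          have : h * g⁻¹ * g = 1 * g := congrArg (fun x => x * g) hc
          simpa [mul_assoc] using this.symm)), map_zero, if_neg hg]
    rw [Finset.sum_congr rfl hterm,
      Finset.sum_ite_eq' F.support h (fun g => act g ↑(F g))]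
    by_cases hh : h ∈ F.support
    · rw [if_pos hh]
    · rw [if_neg hh]
      have h0 : F h = 0 := Finsupp.notMem_support_iff.mp hh
      rw [h0]
      simp
  constructor
  · -- injectivity
    rw [← LinearMap.ker_eq_bot]
    apply LinearMap.ker_eq_bot'.mpr
    intro F hF
    ext h : 1
    have hc := hcomp_lsum F h
    rw [hF, map_zero, Finsupp.zero_apply] at hc
    have h0 : (↑(F h) : M) = 0 := by
      have := congrArg (act h⁻¹) hc.symm
      rwa [hinv1, map_zero] at this
    rw [Finsupp.zero_apply]
    ext
    simpa using h0
  · -- surjectivity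
    intro m
    have hmem : ∀ h : G, act h⁻¹ (ρ m h) ∈ coinvariants δ := by
      intro h
      rw [mem_coinvariants_iff]
      rw [hhopf h⁻¹ (ρ m h), hcomp m h, TensorProduct.map_tmul,
        LinearMap.mulRight_apply, MonoidAlgebra.single_mul_single, mul_one,
        mul_inv_cancel, MonoidAlgebra.one_def]
    refine ⟨Finsupp.onFinset (ρ m).support
      (fun h => ⟨act h⁻¹ (ρ m h), hmem h⟩) ?_, ?_⟩
    · intro h hne
      rw [Finsupp.mem_support_iff]
      intro h0
      apply hne
      ext
      simp [h0]
    · rw [Finsupp.lsum_apply]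
      rw [Finsupp.sum_of_support_subset _ Finsupp.support_onFinset_subset _
        (fun i _ => by simp)]
      have hterm : ∀ h ∈ (ρ m).support,
          (act h ∘ₗ (coinvariants δ).subtype)
            ((Finsupp.onFinset (ρ m).support (fun h => ⟨act h⁻¹ (ρ m h), hmem h⟩)
              (by intro h hne
                  rw [Finsupp.mem_support_iff]
                  intro h0
                  apply hne
                  ext
                  simp [h0])) h)
            = ρ m h := by
        intro h _
        simp only [LinearMap.comp_apply, Submodule.subtype_apply, Finsupp.onFinset_apply]
        exact hinv2 h (ρ m h)
      rw [Finset.sum_congr rfl hterm]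
      exact hsum m
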